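/- For the specific neural network f: ℝ → ℝ given by f(x) = W¹ tanh(W⁰x + b⁰) + b¹ with W⁰ = (−1, −1)ᵀ, b⁰ = (−1, 1)ᵀ, W¹ = (−1, 1), b¹ = −0.5, and for the matrix T = (e₁ − e₂)(e₁ − e₂)ᵀ, the matrix P(L², T) = [A; B]ᵀ [[0, T]; [T, −2T]] [A; B] + diag(−L²I, 0, (W¹)ᵀW¹) with A = [W⁰, 0] and B = [0, I₂] is negative semidefinite for every L² > 0, no matter how small. -/

import Mathlib

open Matrix

noncomputable def W0c : Matrix (Fin 2) (Fin 1) ℝ := !![-1; -1]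

noncomputable def W1c : Matrix (Fin 1) (Fin 2) ℝ := !![-1, 1]

noncomputable def Tc : Matrix (Fin 2) (Fin 2) ℝ := Matrix.vecMulVec ![1, -1] ![1, -1]

noncomputable def Ac : Matrix (Fin 2) (Fin 1 ⊕ Fin 2) ℝ :=
  Matrix.of fun i => Sum.elim (fun j => W0c i j) (fun _ => 0)

noncomputable def Bc : Matrix (Fin 2) (Fin 1 ⊕ Fin 2) ℝ :=
  Matrix.of fun i => Sum.elim (fun _ => (0 : ℝ)) (fun j => (1 : Matrix (Fin 2) (Fin 2) ℝ) i j)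

noncomputable def Sc : Matrix (Fin 2 ⊕ Fin 2) (Fin 1 ⊕ Fin 2) ℝ :=
  Matrix.of (Sum.elim (fun i => Ac i) (fun i => Bc i))

noncomputable def Pc (L2 : ℝ) : Matrix (Fin 1 ⊕ Fin 2) (Fin 1 ⊕ Fin 2) ℝ :=
  Scᵀ * Matrix.fromBlocks 0 Tc Tc ((-2 : ℝ) • Tc) * Sc
    + Matrix.fromBlocks ((-L2) • (1 : Matrix (Fin 1) (Fin 1) ℝ)) 0 0 (W1cᵀ * W1c)

/-! The vector `v = e₁ - e₂` is orthogonal to `W⁰ = (-1, -1)ᵀ`, so with the rank-one coupling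
`T = v vᵀ` the cross term `2 (W⁰u)ᵀ T y` of the quadratic form of `P(L², T)` at `(u, y)` vanishes,
while `W¹ᵀ W¹ = T` cancels half of `-2 yᵀ T y`. The form is therefore `-L² ‖u‖² - (vᵀ y)²`, which is
nonpositive for every `L² ≥ 0`. -/

namespace Matrix

variable {R : Type*} [CommRing R] {k m n : Type*} [Fintype k] [Fintype m] [Fintype n]

theorem dotProduct_transpose_mul_mul_mulVec (S : Matrix m n R) (M : Matrix m m R) (z : n → R) :
    z ⬝ᵥ (Sᵀ * M * S) *ᵥ z = S *ᵥ z ⬝ᵥ M *ᵥ (S *ᵥ z) := by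
  rw [← mulVec_mulVec, ← mulVec_mulVec, dotProduct_transpose_mulVec, dotProduct_comm]

theorem sumElim_dotProduct_fromBlocks_mulVec_sumElim (A : Matrix m m R) (B : Matrix m n R)
    (C : Matrix n m R) (D : Matrix n n R) (u : m → R) (y : n → R) :
    Sum.elim u y ⬝ᵥ fromBlocks A B C D *ᵥ Sum.elim u y
      = u ⬝ᵥ A *ᵥ u + u ⬝ᵥ B *ᵥ y + y ⬝ᵥ C *ᵥ u + y ⬝ᵥ D *ᵥ y := by
  simp only [fromBlocks_mulVec, Sum.elim_comp_inl, Sum.elim_comp_inr, sumElim_dotProduct_sumElim,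
    dotProduct_add]
  ring

theorem dotProduct_vecMulVec_mulVec (a b v : n → R) :
    a ⬝ᵥ vecMulVec v v *ᵥ b = (a ⬝ᵥ v) * (v ⬝ᵥ b) := by
  rw [dotProduct_mulVec, vecMul_vecMulVec, smul_dotProduct, smul_eq_mul]

variable [DecidableEq m] [DecidableEq n]

/-- `P(L², T)` of the LipSDP condition for `x ↦ W¹ φ(W⁰ x + b⁰) + b¹` with slope bounds
`α = 0`, `β = 1`, where `[A; B] = fromBlocks W⁰ 0 0 1`. -/
def lipSDPMatrix (W0 : Matrix n m R) (W1 : Matrix k n R) (T : Matrix n n R) (L2 : R) :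
    Matrix (m ⊕ n) (m ⊕ n) R :=
  (fromBlocks W0 0 0 (1 : Matrix n n R))ᵀ * fromBlocks 0 T T ((-2 : R) • T)
      * fromBlocks W0 0 0 (1 : Matrix n n R)
    + fromBlocks ((-L2) • (1 : Matrix m m R)) 0 0 (W1ᵀ * W1)

theorem sumElim_dotProduct_lipSDPMatrix_mulVec_sumElim {W0 : Matrix n m R} {W1 : Matrix k n R}
    {v : n → R} (hv : v ᵥ* W0 = 0) (hW1 : W1ᵀ * W1 = vecMulVec v v) (L2 : R) (u : m → R)
    (y : n → R) :
    Sum.elim u y ⬝ᵥ lipSDPMatrix W0 W1 (vecMulVec v v) L2 *ᵥ Sum.elim u y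
      = -L2 * (u ⬝ᵥ u) - (v ⬝ᵥ y) ^ 2 := by
  have hW0u : v ⬝ᵥ W0 *ᵥ u = 0 := by
    rw [dotProduct_mulVec, hv, zero_dotProduct]
  have hS : fromBlocks W0 0 0 1 *ᵥ Sum.elim u y = Sum.elim (W0 *ᵥ u) y := by
    simp [fromBlocks_mulVec]
  rw [lipSDPMatrix, add_mulVec, dotProduct_add, dotProduct_transpose_mul_mul_mulVec, hS, hW1,
    sumElim_dotProduct_fromBlocks_mulVec_sumElim, sumElim_dotProduct_fromBlocks_mulVec_sumElim]
  simp only [smul_mulVec, dotProduct_smul, dotProduct_vecMulVec_mulVec, hW0u, one_mulVec,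
    zero_mulVec, dotProduct_zero, smul_eq_mul, dotProduct_comm (W0 *ᵥ u) v,
    dotProduct_comm y v]
  ring

theorem dotProduct_lipSDPMatrix_mulVec_nonpos {W0 : Matrix n m ℝ} {W1 : Matrix k n ℝ}
    {v : n → ℝ} (hv : v ᵥ* W0 = 0) (hW1 : W1ᵀ * W1 = vecMulVec v v) {L2 : ℝ}
    (hL2 : 0 ≤ L2) (z : m ⊕ n → ℝ) :
    z ⬝ᵥ lipSDPMatrix W0 W1 (vecMulVec v v) L2 *ᵥ z ≤ 0 := by
  rw [← Sum.elim_comp_inl_inr z, sumElim_dotProduct_lipSDPMatrix_mulVec_sumElim hv hW1]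
  have hu : 0 ≤ z ∘ Sum.inl ⬝ᵥ z ∘ Sum.inl := by
    simpa only [star_trivial] using dotProduct_self_star_nonneg (z ∘ Sum.inl)
  linarith [mul_nonneg hL2 hu, sq_nonneg (v ⬝ᵥ z ∘ Sum.inr)]

end Matrix

theorem Pc_eq_lipSDPMatrix (L2 : ℝ) : Pc L2 = lipSDPMatrix W0c W1c Tc L2 := rfl

theorem vecMul_W0c : ![1, -1] ᵥ* W0c = 0 := by
  ext j
  simp [W0c, vecMul, dotProduct]

theorem W1c_transpose_mul_self : W1cᵀ * W1c = Tc := by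
  ext i j
  fin_cases i <;> fin_cases j <;> simp [W1c, Tc, mul_apply]

theorem counterexample_P_negsemidef :
    ∀ L2 : ℝ, 0 < L2 → ∀ z : Fin 1 ⊕ Fin 2 → ℝ, z ⬝ᵥ (Pc L2).mulVec z ≤ 0 := by
  intro L2 hL2 z
  rw [Pc_eq_lipSDPMatrix]
  exact dotProduct_lipSDPMatrix_mulVec_nonpos vecMul_W0c W1c_transpose_mul_self hL2.le z
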